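/- Let W_T be the double affine Weyl semigroup of type affine SL₂, and let x = w₀ τ^{r α∨} ε^{kα∨ + mδ + lΛ₀} ∈ W_T with level l ≥ 1. If l ≠ 1, then 1 ≤ |LP(x)| ≤ 2; if l = 1, then 1 ≤ |LP(x)| ≤ 3. -/
import Mathlib


/-! A concrete model of the Weyl group of affine SL₂ (the infinite dihedral group),
its affine real roots, its coweight lattice, the double affine Weyl semigroup
`W_T = W ⋉ T`, the length functional and length positive sets, and the quantum
Bruhat graph `QBG(W)` with its paths, weights and distances. -/

namespace SL2hat

/-- An element `w₀ τ^{t·α∨}` of the infinite dihedral Weyl group `W` of affine SL₂;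
`eps = true` means `w₀ = s₁`. -/
structure D where
  eps : Bool
  t : ℤ
deriving DecidableEq

/-- Multiplication in `W` (using `τ^{t} s₁ = s₁ τ^{-t}`). -/
def dmul (a b : D) : D := ⟨xor a.eps b.eps, (if b.eps then -a.t else a.t) + b.t⟩

/-- The identity element `e`. -/
def done : D := ⟨false, 0⟩

/-- Inversion in `W`. -/
def dinv (a : D) : D := ⟨a.eps, if a.eps then a.t else -a.t⟩

/-- The simple reflection `s₁`. -/
def s1 : D := ⟨true, 0⟩

/-- The simple reflection `s₀ = s₁ τ^{-α∨}`. -/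
def s0 : D := ⟨true, -1⟩

/-- The translation `τ^{t·α∨}`. -/
def tau (t : ℤ) : D := ⟨false, t⟩

/-- The length function `ℓ` of the infinite dihedral group. -/
def len (a : D) : ℤ := if a.eps then (if 0 ≤ a.t then 2*a.t+1 else -(2*a.t)-1) else 2*|a.t|

/-- A real affine root `c·α + n·δ` of affine SL₂ (with `c = ±1`). -/
structure R where
  c : ℤ
  n : ℤ
deriving DecidableEq

/-- Positivity of roots: `Φ⁺ = {sgn(n)(α + nδ) : n ∈ ℤ}`. -/
def R.pos (β : R) : Prop := (β.c = 1 ∧ 0 ≤ β.n) ∨ (β.c = -1 ∧ 1 ≤ β.n)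

/-- Negation of a root. -/
def rneg (β : R) : R := ⟨-β.c, -β.n⟩

/-- The simple root `α̃₁ = α`. -/
def alpha1 : R := ⟨1, 0⟩

/-- The simple root `α̃₀ = -α + δ`. -/
def alpha0 : R := ⟨-1, 1⟩

/-- The simple (affine) roots. -/
def R.simple (β : R) : Prop := β = alpha1 ∨ β = alpha0

/-- The reflection `s_β ∈ W` associated to the real root `β` (so `s_{α+nδ} = (true, n)`). -/
def refl (β : R) : D := ⟨true, β.c * β.n⟩

/-- The action of `W` on the real roots: `w₀τ^λ(α + nδ) = w₀α + (n − ⟨α, λ⟩)δ`. -/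
def ract (g : D) (β : R) : R := ⟨if g.eps then -β.c else β.c, β.n - 2 * g.t * β.c⟩

/-- `⟨2ρ, β∨⟩ = 2·ht(β)` for a real root `β = cα + nδ` (of height `c + 2n`). -/
def tworho (β : R) : ℤ := 2*β.c + 4*β.n

/-- A coweight `k·α∨ + m·δ + l·Λ₀`. -/
structure P where
  k : ℤ
  m : ℤ
  l : ℤ
deriving DecidableEq

/-- The zero coweight. -/
def pzero : P := ⟨0, 0, 0⟩

/-- Addition of coweights. -/
def padd (μ ν : P) : P := ⟨μ.k+ν.k, μ.m+ν.m, μ.l+ν.l⟩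

/-- Subtraction of coweights. -/
def psub (μ ν : P) : P := ⟨μ.k-ν.k, μ.m-ν.m, μ.l-ν.l⟩

/-- The coroot `β∨ = c·α∨ + n·δ` of the real root `β = c·α + n·δ`. -/
def coroot (β : R) : P := ⟨β.c, β.n, 0⟩

/-- The pairing `⟨β, μ⟩` between roots and coweights. -/
def pairing (β : R) (μ : P) : ℤ := 2*β.c*μ.k + β.n*μ.l

/-- The action of `W` on coweights:
`w₀τ^λ(μ₀ + mδ + lΛ₀) = w₀μ₀ + l·w₀λ + (m − ⟨μ₀,λ⟩ − (l/2)⟨λ,λ⟩)δ + lΛ₀`. -/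
def pact (g : D) (μ : P) : P :=
  ⟨(if g.eps then -1 else 1) * (μ.k + μ.l * g.t), μ.m - 2*μ.k*g.t - μ.l * g.t^2, μ.l⟩

/-- An element `w ε^μ` of the double affine Weyl semigroup `W_T`. -/
structure WT where
  w : D
  mu : P

/-- The level of `x = w ε^{kα∨ + mδ + lΛ₀}` is `l`. -/
def WT.lev (x : WT) : ℤ := x.mu.l

/-- Membership of a coweight in the (integral) Tits cone `T`. -/
def inTits (μ : P) : Prop := 0 < μ.l ∨ (μ.l = 0 ∧ μ.k = 0)

/-- The product in `W_T`: `(w ε^μ)(w' ε^{μ'}) = ww' ε^{(w')⁻¹μ + μ'}`. -/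
def wtmul (x y : WT) : WT := ⟨dmul x.w y.w, padd (pact (dinv y.w) x.mu) y.mu⟩

/-- Indicator function of a proposition (e.g. `Φ⁺(·)`). -/
noncomputable def ind (p : Prop) : ℤ := @ite _ p (Classical.dec p) 1 0

/-- The length functional `ℓ(x, β) = ⟨β, μ⟩ + Φ⁺(β) − Φ⁺(wβ)` for `x = w ε^μ`. -/
noncomputable def lfun (x : WT) (β : R) : ℤ :=
  pairing β x.mu + ind β.pos - ind (ract x.w β).pos

/-- The length positive set `LP(x) = {v ∈ W : ℓ(x, vβ) ≥ 0 for all β ∈ Φ⁺}`. -/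
def LP (x : WT) : Set D := {v : D | ∀ β : R, β.pos → 0 ≤ lfun x (ract v β)}

/-- An edge of the quantum Bruhat graph from `u` to `v = u s_β`, `β ∈ Φ⁺`:
either a Bruhat edge (`ℓ(v) = ℓ(u) + 1`) or a quantum edge
(`ℓ(v) = ℓ(u) + 1 − ⟨2ρ, β∨⟩`). -/
structure Edge (u v : D) where
  β : R
  hpos : β.pos
  hv : v = dmul u (refl β)
  cond : len v = len u + 1 ∨ len v = len u + 1 - tworho β

/-- The weight of an edge: `0` for a Bruhat edge, `β∨` for a quantum edge. -/
def Edge.wt {u v : D} (e : Edge u v) : P :=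
  if len v = len u + 1 then pzero else coroot e.β

/-- A path in the quantum Bruhat graph. -/
inductive Path : D → D → Type
  | nil (u : D) : Path u u
  | cons {u v w : D} (e : Edge u v) (p : Path v w) : Path u w

/-- The length (number of edges) of a path. -/
def Path.length : ∀ {u v : D}, Path u v → ℕ
  | _, _, .nil _ => 0
  | _, _, .cons _ p => p.length + 1

/-- The total weight of a path. -/
def Path.wt : ∀ {u v : D}, Path u v → P
  | _, _, .nil _ => pzero
  | _, _, .cons e p => padd e.wt p.wt

/-- A path is shortest if no path between the same endpoints has fewer edges. -/
def Shortest {u v : D} (p : Path u v) : Prop := ∀ q : Path u v, p.length ≤ q.length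

/-- The distance `d(u ⇒ v)` in `QBG(W)`. -/
noncomputable def dist (u v : D) : ℕ := sInf {n | ∃ p : Path u v, p.length = n}

/-- The Bruhat order on `W`, generated by `a < a·s_β` whenever `β ∈ Φ⁺` and
`ℓ(a) < ℓ(a·s_β)`. -/
def bruhatLE : D → D → Prop :=
  Relation.ReflTransGen (fun a b => (∃ β : R, β.pos ∧ b = dmul a (refl β)) ∧ len a < len b)

/-- `w` is left-sided if `s₁ w > w` (the identity is both left- and right-sided). -/
def leftSided (w : D) : Prop := len w < len (dmul s1 w)

/-- `w` is right-sided if `s₀ w > w`. -/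
def rightSided (w : D) : Prop := len w < len (dmul s0 w)

/-- Two elements are same-sided if both are left-sided or both are right-sided. -/
def sameSided (u v : D) : Prop := (leftSided u ∧ leftSided v) ∨ (rightSided u ∧ rightSided v)

/-- The set `M_{x,y}` of distance minimising pairs
`(u,v) ∈ LP(x) × LP(y)` for `d(u ⇒ w_y v)`. -/
noncomputable def M (x y : WT) : Set (D × D) :=
  {uv | uv.1 ∈ LP x ∧ uv.2 ∈ LP y ∧
    ∀ u' v' : D, u' ∈ LP x → v' ∈ LP y →
      dist uv.1 (dmul y.w uv.2) ≤ dist u' (dmul y.w v')}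

/-- Schremmer's formula `x *_{u,v}^p y = w_x u v⁻¹ ε^{v u⁻¹ μ_x + μ_y − v·wt(p)}`. -/
def demFormula (x y : WT) (u v : D) (p : Path u (dmul y.w v)) : WT :=
  ⟨dmul x.w (dmul u (dinv v)),
    psub (padd (pact (dmul v (dinv u)) x.mu) y.mu) (pact v p.wt)⟩

end SL2hat

namespace SL2hat

private lemma ind_pos_one (n : ℤ) : ind (R.pos ⟨1, n⟩) = if 0 ≤ n then 1 else 0 := by
  unfold ind R.pos
  dsimp only
  split <;> split <;> omega

private lemma ind_pos_neg (n : ℤ) : ind (R.pos ⟨-1, n⟩) = if 1 ≤ n then 1 else 0 := by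
  unfold ind R.pos
  dsimp only
  split <;> split <;> omega

private lemma false_mem (ew : Bool) (r k m l t K : ℤ) (hl : 1 ≤ l)
    (hK : K = k - l * t) (h0 : 0 ≤ K) (h1 : 2 * K ≤ l)
    (hz : K = 0 → t ≤ 0) (hL : 2 * K = l → 0 ≤ t) :
    (⟨false, t⟩ : D) ∈ LP ⟨⟨ew, r⟩, ⟨k, m, l⟩⟩ := by
  intro β hpos
  obtain ⟨c, n⟩ := β
  rcases hpos with ⟨hc, hn⟩ | ⟨hc, hn⟩ <;> subst hc <;> cases ew <;>
    simp [lfun, ract, pairing, ind_pos_one, ind_pos_neg]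
  all_goals first
  | (have hn' : (0:ℤ) ≤ n := hn
     rcases (by omega : n = 0 ∨ 1 ≤ n) with hn0 | hn1
     · subst hn0
       by_cases hK0 : K = 0
       · have ht := hz hK0
         split_ifs <;> linarith
       · have hK1 : 1 ≤ K := by omega
         split_ifs <;> linarith
     · have hnl : 1 * l ≤ n * l := mul_le_mul_of_nonneg_right hn1 (by omega)
       split_ifs <;> linarith)
  | (have hn' : (1:ℤ) ≤ n := hn
     rcases (by omega : n = 1 ∨ 2 ≤ n) with hn0 | hn2
     · subst hn0
       by_cases hKl : 2 * K = l
       · have ht := hL hKl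
         split_ifs <;> linarith
       · have hK1 : 2 * K ≤ l - 1 := by omega
         split_ifs <;> linarith
     · have hnl : 2 * l ≤ n * l := mul_le_mul_of_nonneg_right (by omega) (by omega)
       split_ifs <;> linarith)

private lemma true_mem (ew : Bool) (r k m l t K : ℤ) (hl : 1 ≤ l)
    (hK : K = -k - l * t) (h0 : 0 ≤ K) (h1 : 2 * K ≤ l)
    (hz : K = 0 → t ≤ -1) (hL : 2 * K = l → 0 ≤ t) :
    (⟨true, t⟩ : D) ∈ LP ⟨⟨ew, r⟩, ⟨k, m, l⟩⟩ := by
  intro β hpos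
  obtain ⟨c, n⟩ := β
  rcases hpos with ⟨hc, hn⟩ | ⟨hc, hn⟩ <;> subst hc <;> cases ew <;>
    simp [lfun, ract, pairing, ind_pos_one, ind_pos_neg]
  all_goals first
  | (have hn' : (0:ℤ) ≤ n := hn
     rcases (by omega : n = 0 ∨ 1 ≤ n) with hn0 | hn1
     · subst hn0
       by_cases hK0 : K = 0
       · have ht := hz hK0
         split_ifs <;> linarith
       · have hK1 : 1 ≤ K := by omega
         split_ifs <;> linarith
     · have hnl : 1 * l ≤ n * l := mul_le_mul_of_nonneg_right hn1 (by omega)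
       split_ifs <;> linarith)
  | (have hn' : (1:ℤ) ≤ n := hn
     rcases (by omega : n = 1 ∨ 2 ≤ n) with hn0 | hn2
     · subst hn0
       by_cases hKl : 2 * K = l
       · have ht := hL hKl
         split_ifs <;> linarith
       · have hK1 : 2 * K ≤ l - 1 := by omega
         split_ifs <;> linarith
     · have hnl : 2 * l ≤ n * l := mul_le_mul_of_nonneg_right (by omega) (by omega)
       split_ifs <;> linarith)


private lemma lp_nonempty (ew : Bool) (r k m l : ℤ) (hl : 1 ≤ l) :
    (LP ⟨⟨ew, r⟩, ⟨k, m, l⟩⟩).Nonempty := by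
  have hdiv : l * (k / l) + k % l = k := Int.mul_ediv_add_emod k l
  have hr0 : 0 ≤ k % l := Int.emod_nonneg k (by omega)
  have hrl : k % l < l := Int.emod_lt_of_pos k (by omega)
  set q := k / l with hq
  set ρ := k % l with hρ
  rcases (by omega : ρ = 0 ∨ (0 < ρ ∧ 2 * ρ < l) ∨ 2 * ρ = l ∨ l < 2 * ρ) with h | ⟨h1, h2⟩ | h | h
  · rcases le_or_gt q 0 with hq0 | hq0
    · exact ⟨_, false_mem ew r k m l q ρ hl (by linarith) hr0 (by omega)
        (fun _ => hq0) (fun hc => absurd hc (by omega))⟩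
    · exact ⟨_, true_mem ew r k m l (-q) ρ hl (by linarith) hr0 (by omega)
        (fun _ => by omega) (fun hc => absurd hc (by omega))⟩
  · exact ⟨_, false_mem ew r k m l q ρ hl (by linarith) hr0 (by omega)
      (fun hc => absurd hc (by omega)) (fun hc => absurd hc (by omega))⟩
  · rcases le_or_gt 0 q with hq0 | hq0
    · exact ⟨_, false_mem ew r k m l q ρ hl (by linarith) hr0 (by omega)
        (fun hc => absurd hc (by omega)) (fun _ => hq0)⟩
    · exact ⟨_, true_mem ew r k m l (-q - 1) (l - ρ) hl (by linarith) (by omega) (by omega)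
        (fun hc => absurd hc (by omega)) (fun _ => by omega)⟩
  · exact ⟨_, true_mem ew r k m l (-q - 1) (l - ρ) hl (by linarith) (by omega) (by omega)
      (fun hc => absurd hc (by omega)) (fun hc => absurd hc (by omega))⟩


private lemma lp_same_aux (ew : Bool) (r k m l : ℤ) (hl : 2 ≤ l) (e : Bool) (t1 t2 : ℤ)
    (h1 : (⟨e, t1⟩ : D) ∈ LP ⟨⟨ew, r⟩, ⟨k, m, l⟩⟩)
    (h2 : (⟨e, t2⟩ : D) ∈ LP ⟨⟨ew, r⟩, ⟨k, m, l⟩⟩)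
    (hlt : t1 < t2) : False := by
  have hA := h2 ⟨1, 0⟩ (Or.inl ⟨rfl, le_refl 0⟩)
  have hB := h1 ⟨-1, 1⟩ (Or.inr ⟨rfl, le_refl 1⟩)
  have hm : (2 * t1 + 1 - 2 * t2) * l ≤ -1 * l :=
    mul_le_mul_of_nonneg_right (by omega) (by omega)
  cases e <;> cases ew <;>
    (simp [lfun, ract, pairing, ind_pos_one, ind_pos_neg] at hA hB
     split_ifs at hA hB <;> linarith [hm])

private lemma lp_same (ew : Bool) (r k m l : ℤ) (hl : 2 ≤ l) {a b : D}
    (ha : a ∈ LP ⟨⟨ew, r⟩, ⟨k, m, l⟩⟩) (hb : b ∈ LP ⟨⟨ew, r⟩, ⟨k, m, l⟩⟩)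
    (he : a.eps = b.eps) : a = b := by
  obtain ⟨ea, ta⟩ := a
  obtain ⟨eb, tb⟩ := b
  simp only at he
  subst he
  rcases lt_trichotomy ta tb with h | h | h
  · exact (lp_same_aux ew r k m l hl ea ta tb ha hb h).elim
  · rw [h]
  · exact (lp_same_aux ew r k m l hl ea tb ta hb ha h).elim


private lemma lp_cand_l1 (ew : Bool) (r k m : ℤ) (v : D)
    (h : v ∈ LP ⟨⟨ew, r⟩, ⟨k, m, 1⟩⟩) :
    v = ⟨false, k - 1⟩ ∨ v = ⟨false, k⟩ ∨ v = ⟨true, -k - 1⟩ ∨ v = ⟨true, -k⟩ := by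
  obtain ⟨e, t⟩ := v
  have hA := h ⟨1, 0⟩ (Or.inl ⟨rfl, le_refl 0⟩)
  have hB := h ⟨-1, 1⟩ (Or.inr ⟨rfl, le_refl 1⟩)
  cases e <;> cases ew <;>
    (simp [lfun, ract, pairing, ind_pos_one, ind_pos_neg] at hA hB
     simp only [D.mk.injEq, Bool.false_eq_true, Bool.true_eq_false, false_and, true_and,
       false_or, or_false]
     split_ifs at hA hB <;> omega)

private lemma pair_false_l1 (ew : Bool) (r k m : ℤ)
    (h1 : (⟨false, k - 1⟩ : D) ∈ LP ⟨⟨ew, r⟩, ⟨k, m, 1⟩⟩)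
    (h2 : (⟨false, k⟩ : D) ∈ LP ⟨⟨ew, r⟩, ⟨k, m, 1⟩⟩) : ew = true := by
  cases ew
  · exfalso
    have hA := h2 ⟨1, 0⟩ (Or.inl ⟨rfl, le_refl 0⟩)
    have hB := h1 ⟨-1, 1⟩ (Or.inr ⟨rfl, le_refl 1⟩)
    simp [lfun, ract, pairing, ind_pos_one, ind_pos_neg] at hA hB
    split_ifs at hA hB <;> omega
  · rfl

private lemma pair_true_l1 (ew : Bool) (r k m : ℤ)
    (h1 : (⟨true, -k - 1⟩ : D) ∈ LP ⟨⟨ew, r⟩, ⟨k, m, 1⟩⟩)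
    (h2 : (⟨true, -k⟩ : D) ∈ LP ⟨⟨ew, r⟩, ⟨k, m, 1⟩⟩) : ew = false := by
  cases ew
  · rfl
  · exfalso
    have hA := h2 ⟨1, 0⟩ (Or.inl ⟨rfl, le_refl 0⟩)
    have hB := h1 ⟨-1, 1⟩ (Or.inr ⟨rfl, le_refl 1⟩)
    simp [lfun, ract, pairing, ind_pos_one, ind_pos_neg] at hA hB
    split_ifs at hA hB <;> omega


private lemma ncard_triple (a b c : D) : ({a, b, c} : Set D).ncard ≤ 3 := by
  have h1 := Set.ncard_insert_le a ({b, c} : Set D)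
  have h2 := Set.ncard_insert_le b ({c} : Set D)
  simp only [Set.ncard_singleton] at *
  omega

/-- For `x = w₀ τ^{rα∨} ε^{kα∨ + mδ + lΛ₀} ∈ W_T` of type affine SL₂ with level
`l ≥ 1`: if `l ≠ 1` then `1 ≤ |LP(x)| ≤ 2`, and if `l = 1` then `1 ≤ |LP(x)| ≤ 3`. -/
theorem statement_6 (x : WT) (hx : 1 ≤ x.lev) :
    (x.lev ≠ 1 → 1 ≤ (LP x).ncard ∧ (LP x).ncard ≤ 2) ∧
    (x.lev = 1 → 1 ≤ (LP x).ncard ∧ (LP x).ncard ≤ 3) := by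
  obtain ⟨⟨ew, r⟩, ⟨k, m, l⟩⟩ := x
  have hl : 1 ≤ l := hx
  constructor
  · intro hne
    have hl2 : 2 ≤ l := by
      have h' : l ≠ 1 := hne
      omega
    obtain ⟨v, hv⟩ := lp_nonempty ew r k m l hl
    have hinj : Set.InjOn D.eps (LP ⟨⟨ew, r⟩, ⟨k, m, l⟩⟩) :=
      fun a ha b hb he => lp_same ew r k m l hl2 ha hb he
    have hfin : (LP ⟨⟨ew, r⟩, ⟨k, m, l⟩⟩).Finite :=
      Set.Finite.of_finite_image (Set.toFinite _) hinj
    refine ⟨(Set.ncard_pos hfin).mpr ⟨v, hv⟩, ?_⟩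
    have h2 := Set.ncard_le_ncard_of_injOn D.eps (fun a _ => Set.mem_univ a.eps)
      hinj Set.finite_univ
    simpa [Set.ncard_univ] using h2
  · intro h1
    have hl1 : l = 1 := h1
    subst hl1
    obtain ⟨v, hv⟩ := lp_nonempty ew r k m 1 le_rfl
    have hsub4 : LP ⟨⟨ew, r⟩, ⟨k, m, 1⟩⟩ ⊆
        {⟨false, k - 1⟩, ⟨false, k⟩, ⟨true, -k - 1⟩, ⟨true, -k⟩} := by
      intro u hu
      rcases lp_cand_l1 ew r k m u hu with h | h | h | h <;> simp [h]
    have hfin : (LP ⟨⟨ew, r⟩, ⟨k, m, 1⟩⟩).Finite :=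
      Set.Finite.subset (Set.toFinite _) hsub4
    refine ⟨(Set.ncard_pos hfin).mpr ⟨v, hv⟩, ?_⟩
    have hle : ∀ a b c : D, LP ⟨⟨ew, r⟩, ⟨k, m, 1⟩⟩ ⊆ {a, b, c} →
        (LP ⟨⟨ew, r⟩, ⟨k, m, 1⟩⟩).ncard ≤ 3 := fun a b c hs =>
      le_trans (Set.ncard_le_ncard hs (Set.toFinite _)) (ncard_triple a b c)
    by_cases hf1 : (⟨false, k - 1⟩ : D) ∈ LP ⟨⟨ew, r⟩, ⟨k, m, 1⟩⟩
    · by_cases hf2 : (⟨false, k⟩ : D) ∈ LP ⟨⟨ew, r⟩, ⟨k, m, 1⟩⟩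
      · have hew : ew = true := pair_false_l1 ew r k m hf1 hf2
        by_cases ht1 : (⟨true, -k - 1⟩ : D) ∈ LP ⟨⟨ew, r⟩, ⟨k, m, 1⟩⟩
        · have ht2 : (⟨true, -k⟩ : D) ∉ LP ⟨⟨ew, r⟩, ⟨k, m, 1⟩⟩ := by
            intro ht2
            have hc := pair_true_l1 ew r k m ht1 ht2
            rw [hew] at hc
            simp at hc
          refine hle ⟨false, k - 1⟩ ⟨false, k⟩ ⟨true, -k - 1⟩ (fun u hu => ?_)
          rcases lp_cand_l1 ew r k m u hu with h | h | h | h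
          · simp [h]
          · simp [h]
          · simp [h]
          · exact absurd (h ▸ hu) ht2
        · refine hle ⟨false, k - 1⟩ ⟨false, k⟩ ⟨true, -k⟩ (fun u hu => ?_)
          rcases lp_cand_l1 ew r k m u hu with h | h | h | h
          · simp [h]
          · simp [h]
          · exact absurd (h ▸ hu) ht1
          · simp [h]
      · refine hle ⟨false, k - 1⟩ ⟨true, -k - 1⟩ ⟨true, -k⟩ (fun u hu => ?_)
        rcases lp_cand_l1 ew r k m u hu with h | h | h | h
        · simp [h]
        · exact absurd (h ▸ hu) hf2
        · simp [h]
        · simp [h]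
    · refine hle ⟨false, k⟩ ⟨true, -k - 1⟩ ⟨true, -k⟩ (fun u hu => ?_)
      rcases lp_cand_l1 ew r k m u hu with h | h | h | h
      · exact absurd (h ▸ hu) hf1
      · simp [h]
      · simp [h]
      · simp [h]


end SL2hat
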